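/- arXiv:2107.03877 — 7 statements merged into one kernel-verified Lean document; each statement's English description precedes it below -/
import Mathlib

section
/- Let E be a finite-dimensional real inner product space, K ⊆ E a nonempty closed cone, v ∈ E, and u a projection of v onto K. Then ‖u‖ = max(0, sup{⟪v, z⟫ : z ∈ K, ‖z‖ = 1}) (with the convention sup ∅ = 0) and ‖u‖² = ⟪v, u⟫. In particular, any two projections of v onto K have the same norm. -/
/-!
Because `K` is a cone, the projection `u` also beats every point `α • z` with `α > 0` and
`z ∈ K`, i.e. `2α⟪v, z⟫ - α²‖z‖² ≤ 2⟪v, u⟫ - ‖u‖²`. Optimizing over `α` along the ray through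
`u` forces `⟪v, u⟫ = ‖u‖²`; along the ray through a unit vector `z` it gives `⟪v, z⟫ ≤ ‖u‖`,
with equality at `z = u / ‖u‖`.
-/

open scoped RealInnerProductSpace

theorem eq_of_forall_pos_two_mul_sub_sq_le {I N : ℝ} (hN : 0 ≤ N)
    (h : ∀ α > 0, 2 * α * I - α ^ 2 * N ≤ 2 * I - N) : I = N := by
  rcases hN.eq_or_lt with rfl | hN
  · linarith [h 2 two_pos, h (1 / 2) one_half_pos]
  rcases le_or_gt I 0 with hI | hI
  · linarith [h (1 / 2) one_half_pos]
  · -- `α = I / N` maximizes the left-hand side, whose maximum `I² / N` exceeds `2I - N` unless `I = N`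
    have hmax : I ^ 2 / N ≤ 2 * I - N := by
      convert h (I / N) (by positivity) using 1
      field_simp
      ring
    rw [div_le_iff₀ hN] at hmax
    nlinarith [sq_nonneg (I - N)]

theorem le_of_forall_pos_two_mul_sub_sq_le {x r : ℝ} (hr : 0 ≤ r)
    (h : ∀ α > 0, 2 * α * x - α ^ 2 ≤ r ^ 2) : x ≤ r :=
  le_of_forall_pos_le_add fun ε hε => by
    have := h (r + ε) (by positivity)
    nlinarith

section ConeProjection

variable {E : Type*} [NormedAddCommGroup E] [InnerProductSpace ℝ E] {K : Set E} {v u : E}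

theorem two_mul_inner_sub_norm_sq_le (hproj : ∀ z ∈ K, ‖v - u‖ ≤ ‖v - z‖) {w : E}
    (hw : w ∈ K) : 2 * ⟪v, w⟫ - ‖w‖ ^ 2 ≤ 2 * ⟪v, u⟫ - ‖u‖ ^ 2 := by
  have h := pow_le_pow_left₀ (norm_nonneg _) (hproj w hw) 2
  rw [norm_sub_sq_real, norm_sub_sq_real] at h
  linarith

theorem two_mul_smul_inner_sub_norm_sq_le
    (hcone : ∀ u ∈ K, ∀ α : ℝ, 0 < α → α • u ∈ K)
    (hproj : ∀ z ∈ K, ‖v - u‖ ≤ ‖v - z‖)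
    {z : E} (hz : z ∈ K) {α : ℝ} (hα : 0 < α) :
    2 * α * ⟪v, z⟫ - α ^ 2 * ‖z‖ ^ 2 ≤ 2 * ⟪v, u⟫ - ‖u‖ ^ 2 := by
  have h := two_mul_inner_sub_norm_sq_le hproj (hcone z hz α hα)
  rwa [real_inner_smul_right, norm_smul, mul_pow, Real.norm_eq_abs, sq_abs, ← mul_assoc] at h

theorem norm_sq_eq_inner_of_cone
    (hcone : ∀ u ∈ K, ∀ α : ℝ, 0 < α → α • u ∈ K)
    (hproj : ∀ z ∈ K, ‖v - u‖ ≤ ‖v - z‖)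
    (huK : u ∈ K) : ‖u‖ ^ 2 = ⟪v, u⟫ :=
  (eq_of_forall_pos_two_mul_sub_sq_le (sq_nonneg _) fun _ hα =>
    two_mul_smul_inner_sub_norm_sq_le hcone hproj huK hα).symm

theorem inner_le_norm_of_cone
    (hcone : ∀ u ∈ K, ∀ α : ℝ, 0 < α → α • u ∈ K)
    (hproj : ∀ z ∈ K, ‖v - u‖ ≤ ‖v - z‖)
    (huK : u ∈ K) {z : E} (hz : z ∈ K) (hz1 : ‖z‖ = 1) :
    ⟪v, z⟫ ≤ ‖u‖ :=
  le_of_forall_pos_two_mul_sub_sq_le (norm_nonneg u) fun α hα => by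
    have h := two_mul_smul_inner_sub_norm_sq_le hcone hproj hz hα
    rw [hz1, ← norm_sq_eq_inner_of_cone hcone hproj huK] at h
    linarith

theorem norm_mem_inner_unit_of_cone
    (hcone : ∀ u ∈ K, ∀ α : ℝ, 0 < α → α • u ∈ K)
    (hproj : ∀ z ∈ K, ‖v - u‖ ≤ ‖v - z‖)
    (huK : u ∈ K) (hu : u ≠ 0) :
    ‖u‖ ∈ {t : ℝ | ∃ z ∈ K, ‖z‖ = 1 ∧ ⟪v, z⟫ = t} := by
  have hpos : 0 < ‖u‖ := norm_pos_iff.mpr hu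
  refine ⟨‖u‖⁻¹ • u, hcone u huK _ (inv_pos.mpr hpos), ?_, ?_⟩
  · rw [norm_smul, norm_inv, norm_norm, inv_mul_cancel₀ hpos.ne']
  · rw [real_inner_smul_right, ← norm_sq_eq_inner_of_cone hcone hproj huK]
    field_simp

theorem norm_eq_max_zero_sSup_of_cone
    (hcone : ∀ u ∈ K, ∀ α : ℝ, 0 < α → α • u ∈ K)
    (hproj : ∀ z ∈ K, ‖v - u‖ ≤ ‖v - z‖)
    (huK : u ∈ K) :
    ‖u‖ = max 0 (sSup {t : ℝ | ∃ z ∈ K, ‖z‖ = 1 ∧ ⟪v, z⟫ = t}) := by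
  have hub : ∀ t ∈ {t : ℝ | ∃ z ∈ K, ‖z‖ = 1 ∧ ⟪v, z⟫ = t}, t ≤ ‖u‖ := by
    rintro t ⟨z, hz, hz1, rfl⟩
    exact inner_le_norm_of_cone hcone hproj huK hz hz1
  refine le_antisymm ?_ (max_le (norm_nonneg u) (Real.sSup_le hub (norm_nonneg u)))
  rcases eq_or_ne u 0 with rfl | hu
  · simp
  · exact (le_csSup ⟨‖u‖, hub⟩ (norm_mem_inner_unit_of_cone hcone hproj huK hu)).trans
      (le_max_right _ _)

end ConeProjection

theorem stmt0_general {E : Type*} [NormedAddCommGroup E] [InnerProductSpace ℝ E]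
    (K : Set E)
    (hcone : ∀ u ∈ K, ∀ α : ℝ, 0 < α → α • u ∈ K)
    (v u : E) (huK : u ∈ K) (hproj : ∀ z ∈ K, ‖v - u‖ ≤ ‖v - z‖) :
    ‖u‖ = max 0 (sSup {t : ℝ | ∃ z ∈ K, ‖z‖ = 1 ∧ (inner ℝ v z : ℝ) = t}) ∧
    ‖u‖ ^ 2 = (inner ℝ v u : ℝ) ∧
    ∀ u' : E, u' ∈ K → (∀ z ∈ K, ‖v - u'‖ ≤ ‖v - z‖) → ‖u'‖ = ‖u‖ := by
  refine ⟨norm_eq_max_zero_sSup_of_cone hcone hproj huK,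
    norm_sq_eq_inner_of_cone hcone hproj huK, fun u' hu'K hproj' => ?_⟩
  rw [norm_eq_max_zero_sSup_of_cone hcone hproj' hu'K,
    norm_eq_max_zero_sSup_of_cone hcone hproj huK]

/-- Let `E` be a finite-dimensional real inner product space, `K ⊆ E` a nonempty
closed cone, `v ∈ E`, and `u` a projection of `v` onto `K`. Then
`‖u‖ = max(0, sup{⟪v, z⟫ : z ∈ K, ‖z‖ = 1})` (with `sup ∅ = 0`, which is Lean's `sSup` convention
on `ℝ`) and `‖u‖² = ⟪v, u⟫`. In particular, any two projections of `v` onto `K` have the same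
norm. -/
theorem stmt0 {E : Type*} [NormedAddCommGroup E] [InnerProductSpace ℝ E] [FiniteDimensional ℝ E]
    (K : Set E) (hne : K.Nonempty) (hcl : IsClosed K)
    (hcone : ∀ u ∈ K, ∀ α : ℝ, 0 < α → α • u ∈ K)
    (v u : E) (huK : u ∈ K) (hproj : ∀ z ∈ K, ‖v - u‖ ≤ ‖v - z‖) :
    ‖u‖ = max 0 (sSup {t : ℝ | ∃ z ∈ K, ‖z‖ = 1 ∧ (inner ℝ v z : ℝ) = t}) ∧
    ‖u‖ ^ 2 = (inner ℝ v u : ℝ) ∧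
    ∀ u' : E, u' ∈ K → (∀ z ∈ K, ‖v - u'‖ ≤ ‖v - z‖) → ‖u'‖ = ‖u‖ :=
  stmt0_general K hcone v u huK hproj
end

section
/- Let E be a finite-dimensional real inner product space and K ⊆ E a nonempty closed cone. For any v, v' ∈ E, if u is a projection of v onto K and u' is a projection of v' onto K, then |‖u‖ − ‖u'‖| ≤ ‖v − v'‖; that is, the map sending v to the (common) norm of its projections onto K is 1-Lipschitz. -/
/-!
Along the ray through a projection `u` of `v`, the distance from `v` is minimal at `u`, so
`⟪v - u, u⟫ = 0` and `‖u‖ = ⟪v, u / ‖u‖⟫`. Comparing with the points `t • z` of the cone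
shows that `‖u‖` dominates `⟪v, z⟫` for every unit vector `z ∈ K`. Hence `‖u‖` is a supremum of
the 1-Lipschitz functions `v ↦ ⟪v, z⟫`, and so is itself 1-Lipschitz.
-/

open RealInnerProductSpace

section ProjectionOntoCone

variable {E : Type*} [NormedAddCommGroup E] [InnerProductSpace ℝ E] {K : Set E}
  (hK : ∀ u ∈ K, ∀ α : ℝ, 0 < α → α • u ∈ K) {v u : E}
  (huK : u ∈ K) (hproj : ∀ z ∈ K, ‖v - u‖ ≤ ‖v - z‖)

include hK huK hproj

theorem inner_sub_proj_self_eq_zero : ⟪v - u, u⟫ = 0 := by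
  have hmin : IsLocalMin (fun t : ℝ => ‖v - t • u‖ ^ 2) 1 := by
    filter_upwards [lt_mem_nhds one_pos] with t ht
    simpa only [one_smul] using pow_le_pow_left₀ (norm_nonneg _) (hproj _ (hK u huK t ht)) 2
  have hderiv : HasDerivAt (fun t : ℝ => ‖v - t • u‖ ^ 2) (2 * ⟪v - (1 : ℝ) • u, -u⟫) 1 :=
    ((hasDerivAt_id (1 : ℝ)).smul_const u).const_sub v |>.norm_sq |>.congr_deriv (by simp)
  simpa [inner_neg_right] using hmin.hasDerivAt_eq_zero hderiv

theorem real_inner_proj_eq_norm_sq : ⟪v, u⟫ = ‖u‖ ^ 2 := by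
  have h := inner_sub_proj_self_eq_zero hK huK hproj
  rwa [inner_sub_left, real_inner_self_eq_norm_sq, sub_eq_zero] at h

theorem norm_sub_proj_sq : ‖v - u‖ ^ 2 = ‖v‖ ^ 2 - ‖u‖ ^ 2 := by
  rw [norm_sub_sq_real, real_inner_proj_eq_norm_sq hK huK hproj]
  ring

theorem real_inner_le_norm_proj {z : E} (hzK : z ∈ K) (hz : ‖z‖ = 1) : ⟪v, z⟫ ≤ ‖u‖ := by
  rcases le_or_gt ⟪v, z⟫ 0 with hneg | hpos
  · exact hneg.trans (norm_nonneg u)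
  have hdist : ‖v - ⟪v, z⟫ • z‖ ^ 2 = ‖v‖ ^ 2 - ⟪v, z⟫ ^ 2 := by
    rw [norm_sub_sq_real, real_inner_smul_right, norm_smul, hz, mul_one, Real.norm_eq_abs, sq_abs]
    ring
  have hle := pow_le_pow_left₀ (norm_nonneg _) (hproj _ (hK z hzK _ hpos)) 2
  rw [hdist, norm_sub_proj_sq hK huK hproj] at hle
  exact abs_le_of_sq_le_sq' (by linarith) (norm_nonneg u) |>.2

end ProjectionOntoCone

theorem norm_proj_sub_norm_proj_le {E : Type*} [NormedAddCommGroup E] [InnerProductSpace ℝ E]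
    {K : Set E} (hK : ∀ u ∈ K, ∀ α : ℝ, 0 < α → α • u ∈ K) {v v' u u' : E}
    (huK : u ∈ K) (hproj : ∀ z ∈ K, ‖v - u‖ ≤ ‖v - z‖)
    (huK' : u' ∈ K) (hproj' : ∀ z ∈ K, ‖v' - u'‖ ≤ ‖v' - z‖) :
    ‖u‖ - ‖u'‖ ≤ ‖v - v'‖ := by
  rcases eq_or_ne u 0 with rfl | hu
  · rw [norm_zero, zero_sub]
    exact (neg_nonpos.2 (norm_nonneg u')).trans (norm_nonneg _)
  set z := ‖u‖⁻¹ • u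
  have hnorm : 0 < ‖u‖ := norm_pos_iff.2 hu
  have hz : ‖z‖ = 1 := norm_smul_inv_norm hu
  have hvz : ⟪v, z⟫ = ‖u‖ := by
    rw [real_inner_smul_right, real_inner_proj_eq_norm_sq hK huK hproj]
    field_simp
  calc ‖u‖ - ‖u'‖ ≤ ⟪v, z⟫ - ⟪v', z⟫ := by
        rw [hvz]
        linarith [real_inner_le_norm_proj hK huK' hproj' (hK u huK _ (inv_pos.2 hnorm)) hz]
    _ = ⟪v - v', z⟫ := (inner_sub_left _ _ _).symm
    _ ≤ ‖v - v'‖ := by simpa [hz] using real_inner_le_norm (v - v') z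

theorem stmt2_general {E : Type*} [NormedAddCommGroup E] [InnerProductSpace ℝ E]
    (K : Set E)
    (hcone : ∀ u ∈ K, ∀ α : ℝ, 0 < α → α • u ∈ K)
    (v v' u u' : E)
    (huK : u ∈ K) (hproj : ∀ z ∈ K, ‖v - u‖ ≤ ‖v - z‖)
    (huK' : u' ∈ K) (hproj' : ∀ z ∈ K, ‖v' - u'‖ ≤ ‖v' - z‖) :
    |‖u‖ - ‖u'‖| ≤ ‖v - v'‖ := by
  rw [abs_sub_le_iff]
  refine ⟨norm_proj_sub_norm_proj_le hcone huK hproj huK' hproj', ?_⟩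
  rw [norm_sub_rev]
  exact norm_proj_sub_norm_proj_le hcone huK' hproj' huK hproj

/-- Let `E` be a finite-dimensional real inner product space and `K ⊆ E` a nonempty
closed cone. For any `v, v' ∈ E`, if `u` is a projection of `v` onto `K` and `u'` is a projection
of `v'` onto `K`, then `|‖u‖ − ‖u'‖| ≤ ‖v − v'‖`: the map sending `v` to the (common) norm of its
projections onto `K` is 1-Lipschitz. -/
theorem stmt2 {E : Type*} [NormedAddCommGroup E] [InnerProductSpace ℝ E] [FiniteDimensional ℝ E]
    (K : Set E) (hne : K.Nonempty) (hcl : IsClosed K)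
    (hcone : ∀ u ∈ K, ∀ α : ℝ, 0 < α → α • u ∈ K)
    (v v' u u' : E)
    (huK : u ∈ K) (hproj : ∀ z ∈ K, ‖v - u‖ ≤ ‖v - z‖)
    (huK' : u' ∈ K) (hproj' : ∀ z ∈ K, ‖v' - u'‖ ≤ ‖v' - z‖) :
    |‖u‖ - ‖u'‖| ≤ ‖v - v'‖ :=
  stmt2_general K hcone v v' u u' huK hproj huK' hproj'
end

section
/- Let E be a finite-dimensional real inner product space and K ⊆ E a nonempty closed convex cone. For every v ∈ E, if u is the projection of v onto K, then ‖u‖ equals the distance from v to the polar cone K°, i.e. ‖u‖ = inf{‖v − w‖ : w ∈ K°}. -/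
/-!
Moreau's decomposition. Minimality of `u` gives the variational inequality `⟪v - u, z - u⟫ ≤ 0`
on `K`; testing it at `z = 2 • u` and `z = (1/2) • u`, both in the cone, forces `⟪v - u, u⟫ = 0`,
and then `v - u ∈ K°`. For `w ∈ K°` write `v - w = u + ((v - u) - w)`: the cross term
`⟪u, (v - u) - w⟫ = -⟪u, w⟫` is nonnegative, so `‖v - w‖ ≥ ‖u‖`, with equality at `w = v - u`.
-/

open RealInnerProductSpace

theorem Metric.infDist_eq_dist_of_forall_dist_le {α : Type*} [PseudoMetricSpace α] {x y : α}
    {s : Set α} (hy : y ∈ s) (h : ∀ z ∈ s, dist x y ≤ dist x z) : infDist x s = dist x y :=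
  le_antisymm (infDist_le_dist_of_mem hy) ((le_infDist ⟨y, hy⟩).2 h)

section

variable {E : Type*} [NormedAddCommGroup E] [InnerProductSpace ℝ E]

theorem real_inner_sub_sub_nonpos_of_forall_norm_sub_le {K : Set E} (hK : Convex ℝ K) {u v : E}
    (hu : u ∈ K) (hmin : ∀ z ∈ K, ‖v - u‖ ≤ ‖v - z‖) : ∀ z ∈ K, ⟪v - u, z - u⟫ ≤ 0 := by
  have : Nonempty K := ⟨⟨u, hu⟩⟩
  refine (norm_eq_iInf_iff_real_inner_le_zero hK hu).1 (le_antisymm ?_ ?_)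
  · exact le_ciInf fun z => hmin z z.2
  · exact ciInf_le ⟨0, Set.forall_mem_range.2 fun _ => norm_nonneg _⟩ (⟨u, hu⟩ : K)

theorem real_inner_eq_zero_of_forall_real_inner_sub_nonpos_of_cone {K : Set E}
    (hcone : ∀ u ∈ K, ∀ α : ℝ, 0 < α → α • u ∈ K) {u w : E} (hu : u ∈ K)
    (h : ∀ z ∈ K, ⟪w, z - u⟫ ≤ 0) : ⟪w, u⟫ = 0 := by
  have hscale : ∀ α : ℝ, 0 < α → (α - 1) * ⟪w, u⟫ ≤ 0 := fun α hα =>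
    calc (α - 1) * ⟪w, u⟫ = ⟪w, α • u - u⟫ := by
          rw [inner_sub_right, real_inner_smul_right]; ring
      _ ≤ 0 := h _ (hcone u hu α hα)
  have h₂ := hscale 2 two_pos
  have h₁ := hscale (1 / 2) one_half_pos
  norm_num at h₁ h₂
  linarith

theorem norm_le_norm_sub_of_real_inner_nonpos {u v w : E} (horth : ⟪u, v - u⟫ = 0)
    (hw : ⟪w, u⟫ ≤ 0) : ‖u‖ ≤ ‖v - w‖ := by
  have hcross : 0 ≤ ⟪u, (v - u) - w⟫ := by
    rw [inner_sub_right, horth, real_inner_comm]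
    linarith
  have hsq : ‖u‖ ^ 2 ≤ ‖v - w‖ ^ 2 :=
    calc ‖u‖ ^ 2 ≤ ‖u‖ ^ 2 + 2 * ⟪u, (v - u) - w⟫ + ‖(v - u) - w‖ ^ 2 := by
          linarith [sq_nonneg ‖(v - u) - w‖]
      _ = ‖v - w‖ ^ 2 := by rw [← norm_add_sq_real, ← add_sub_assoc, add_sub_cancel]
  exact (sq_le_sq₀ (norm_nonneg _) (norm_nonneg _)).1 hsq

end

theorem stmt3_general {E : Type*} [NormedAddCommGroup E] [InnerProductSpace ℝ E]
    (K : Set E) (hconv : Convex ℝ K)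
    (hcone : ∀ u ∈ K, ∀ α : ℝ, 0 < α → α • u ∈ K)
    (v u : E) (huK : u ∈ K) (hproj : ∀ z ∈ K, ‖v - u‖ ≤ ‖v - z‖) :
    ‖u‖ = Metric.infDist v {w : E | ∀ z ∈ K, (inner ℝ w z : ℝ) ≤ 0} := by
  have hvar := real_inner_sub_sub_nonpos_of_forall_norm_sub_le hconv huK hproj
  have horth := real_inner_eq_zero_of_forall_real_inner_sub_nonpos_of_cone hcone huK hvar
  have hpolar : v - u ∈ {w : E | ∀ z ∈ K, ⟪w, z⟫ ≤ 0} := fun z hz => by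
    simpa only [inner_sub_right, horth, sub_zero] using hvar z hz
  rw [Metric.infDist_eq_dist_of_forall_dist_le hpolar, dist_eq_norm, sub_sub_cancel]
  intro w hw
  rw [dist_eq_norm, dist_eq_norm, sub_sub_cancel]
  exact norm_le_norm_sub_of_real_inner_nonpos (by rwa [real_inner_comm]) (hw u huK)

/-- Let `E` be a finite-dimensional real inner product space and `K ⊆ E` a nonempty
closed convex cone. For every `v ∈ E`, if `u` is the projection of `v` onto `K`, then `‖u‖` equals
the distance from `v` to the polar cone `K°`, i.e. `‖u‖ = inf{‖v − w‖ : w ∈ K°}`. -/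
theorem stmt3 {E : Type*} [NormedAddCommGroup E] [InnerProductSpace ℝ E] [FiniteDimensional ℝ E]
    (K : Set E) (hne : K.Nonempty) (hcl : IsClosed K) (hconv : Convex ℝ K)
    (hcone : ∀ u ∈ K, ∀ α : ℝ, 0 < α → α • u ∈ K)
    (v u : E) (huK : u ∈ K) (hproj : ∀ z ∈ K, ‖v - u‖ ≤ ‖v - z‖) :
    ‖u‖ = Metric.infDist v {w : E | ∀ z ∈ K, (inner ℝ w z : ℝ) ≤ 0} :=
  stmt3_general K hconv hcone v u huK hproj
end

section
/- Let E be a finite-dimensional real inner product space and K ⊆ E a nonempty closed cone. Let v ∈ E and write v = u + w, where u is the orthogonal projection of v onto the linear span of K and w = v − u is orthogonal to that span. Then the set of projections of v onto K equals the set of projections of u onto K; in particular their norms agree. Moreover, the distance from v to the polar cone K° equals the distance from u to K°. -/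
/-!
Since `u` is the orthogonal projection of `v` onto `span K`, Pythagoras gives
`‖v - z‖² = ‖v - u‖² + ‖u - z‖²` for every `z ∈ span K`; so `z ↦ ‖v - z‖` and `z ↦ ‖u - z‖`
are minimised on `K` at the same points. The polar cone is invariant under translation by
`v - u ⊥ K`, and translation is an isometry, so `v` and `u` are equally far from it.
-/

open Submodule Metric RealInnerProductSpace
open scoped Pointwise

section

variable {E : Type*} [NormedAddCommGroup E]

theorem Metric.infDist_add_left_of_vadd_eq {S : Set E} {w : E} (hS : w +ᵥ S = S) (x : E) :
    infDist (w + x) S = infDist x S := by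
  conv_lhs => rw [← hS]
  exact infDist_image (isometry_vadd E w)

variable [InnerProductSpace ℝ E]

theorem norm_sub_sq_eq_of_sub_mem_orthogonal {W : Submodule ℝ E} {v u z : E} (hu : u ∈ W)
    (hz : z ∈ W) (hw : v - u ∈ Wᗮ) : ‖v - z‖ ^ 2 = ‖v - u‖ ^ 2 + ‖u - z‖ ^ 2 := by
  have hperp : ⟪v - u, u - z⟫ = 0 := (mem_orthogonal' W _).1 hw _ (W.sub_mem hu hz)
  rw [← sub_add_sub_cancel v u z, sq, sq, sq, norm_add_sq_eq_norm_sq_add_norm_sq_real hperp]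

theorem norm_sub_le_norm_sub_iff_of_sub_mem_orthogonal {W : Submodule ℝ E} {v u p z : E}
    (hu : u ∈ W) (hp : p ∈ W) (hz : z ∈ W) (hw : v - u ∈ Wᗮ) :
    ‖v - p‖ ≤ ‖v - z‖ ↔ ‖u - p‖ ≤ ‖u - z‖ := by
  rw [← sq_le_sq₀ (norm_nonneg _) (norm_nonneg _), ← sq_le_sq₀ (norm_nonneg _) (norm_nonneg _),
    norm_sub_sq_eq_of_sub_mem_orthogonal hu hp hw, norm_sub_sq_eq_of_sub_mem_orthogonal hu hz hw,
    add_le_add_iff_left]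

def polarCone (K : Set E) : Set E :=
  {w | ∀ z ∈ K, ⟪w, z⟫ ≤ 0}

theorem vadd_polarCone_of_mem_orthogonal {K : Set E} {w : E} (hw : w ∈ (span ℝ K)ᗮ) :
    w +ᵥ polarCone K = polarCone K := by
  ext p
  simp only [Set.mem_vadd_set_iff_neg_vadd_mem, polarCone, Set.mem_ofPred_eq]
  refine forall₂_congr fun z hz => ?_
  rw [vadd_eq_add, inner_add_left, inner_neg_left,
    (mem_orthogonal' _ _).1 hw z (subset_span hz), neg_zero, zero_add]

end

theorem stmt4_general {E : Type*} [NormedAddCommGroup E] [InnerProductSpace ℝ E]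
    (K : Set E) (v u : E) (hu : u ∈ Submodule.span ℝ K)
    (horth : ∀ z ∈ Submodule.span ℝ K, (inner ℝ (v - u) z : ℝ) = 0) :
    {p : E | p ∈ K ∧ ∀ z ∈ K, ‖v - p‖ ≤ ‖v - z‖} =
      {p : E | p ∈ K ∧ ∀ z ∈ K, ‖u - p‖ ≤ ‖u - z‖} ∧
    Metric.infDist v {w : E | ∀ z ∈ K, (inner ℝ w z : ℝ) ≤ 0} =
      Metric.infDist u {w : E | ∀ z ∈ K, (inner ℝ w z : ℝ) ≤ 0} := by
  have hw : v - u ∈ (span ℝ K)ᗮ := (mem_orthogonal' _ _).2 horth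
  refine ⟨Set.ext fun p => and_congr_right fun hp => forall₂_congr fun z hz => ?_, ?_⟩
  · exact norm_sub_le_norm_sub_iff_of_sub_mem_orthogonal hu (subset_span hp) (subset_span hz) hw
  · exact sub_add_cancel v u ▸
      infDist_add_left_of_vadd_eq (vadd_polarCone_of_mem_orthogonal hw) u

/-- Let `E` be a finite-dimensional real inner product space and `K ⊆ E` a nonempty
closed cone. Let `v ∈ E` and write `v = u + w`, where `u` is the orthogonal projection of `v` onto
the linear span of `K` (i.e. `u ∈ span K` and `w = v − u` is orthogonal to that span). Then the
set of projections of `v` onto `K` equals the set of projections of `u` onto `K` (in particular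
their norms agree), and the distance from `v` to the polar cone `K°` equals the distance from `u`
to `K°`. -/
theorem stmt4 {E : Type*} [NormedAddCommGroup E] [InnerProductSpace ℝ E] [FiniteDimensional ℝ E]
    (K : Set E) (hne : K.Nonempty) (hcl : IsClosed K)
    (hcone : ∀ u ∈ K, ∀ α : ℝ, 0 < α → α • u ∈ K)
    (v u : E) (hu : u ∈ Submodule.span ℝ K)
    (horth : ∀ z ∈ Submodule.span ℝ K, (inner ℝ (v - u) z : ℝ) = 0) :
    {p : E | p ∈ K ∧ ∀ z ∈ K, ‖v - p‖ ≤ ‖v - z‖} =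
      {p : E | p ∈ K ∧ ∀ z ∈ K, ‖u - p‖ ≤ ‖u - z‖} ∧
    Metric.infDist v {w : E | ∀ z ∈ K, (inner ℝ w z : ℝ) ≤ 0} =
      Metric.infDist u {w : E | ∀ z ∈ K, (inner ℝ w z : ℝ) ≤ 0} :=
  stmt4_general K v u hu horth
end

section
/- Let E be a finite-dimensional real inner product space, K ⊆ E a nonempty closed cone, v ∈ E, and u a projection of v onto K. Then ‖u‖ ≤ inf{‖v − w‖ : w ∈ K°}, and moreover ‖u‖ = 0 if and only if inf{‖v − w‖ : w ∈ K°} = 0. -/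
/-!
Perturbing the projection `u` along its own ray (`(1 ± t) • u ∈ K`) shows `⟪v - u, u⟫ = 0`, so
`‖u‖² = ⟪v, u⟫ ≤ ⟪v - w, u⟫ ≤ ‖v - w‖ ‖u‖` for every `w ∈ K°`. If `u = 0`, perturbing `0` along
the rays of `K` shows `v ∈ K°`, so the infimum vanishes.
-/

open Filter Topology RealInnerProductSpace

section InnerProductSpace

variable {E : Type*} [NormedAddCommGroup E] [InnerProductSpace ℝ E]

lemma real_inner_nonpos_of_norm_le_norm_sub_smul {x y : E}
    (h : ∀ t : ℝ, 0 < t → t < 1 → ‖x‖ ≤ ‖x - t • y‖) : ⟪x, y⟫ ≤ 0 := by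
  have hlinear : ∀ t : ℝ, 0 < t → t < 1 → 2 * ⟪x, y⟫ ≤ t * ‖y‖ ^ 2 := by
    intro t ht0 ht1
    have hsq : ‖x‖ ^ 2 ≤ ‖x - t • y‖ ^ 2 := pow_le_pow_left₀ (norm_nonneg _) (h t ht0 ht1) 2
    rw [norm_sub_sq_real, real_inner_smul_right, norm_smul, mul_pow, Real.norm_eq_abs,
      sq_abs] at hsq
    nlinarith
  have hlim : Tendsto (fun t : ℝ => t * ‖y‖ ^ 2) (𝓝[>] 0) (𝓝 0) :=
    (Continuous.tendsto' (by fun_prop) 0 0 (by simp)).mono_left nhdsWithin_le_nhds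
  have hlimit := ge_of_tendsto hlim <|
    eventually_of_mem (Ioo_mem_nhdsGT one_pos) fun t ht => hlinear t ht.1 ht.2
  linarith

section Cone

variable {K : Set E} (hcone : ∀ u ∈ K, ∀ α : ℝ, 0 < α → α • u ∈ K)
include hcone

lemma real_inner_sub_self_eq_zero_of_forall_norm_sub_le {v u : E} (huK : u ∈ K)
    (hproj : ∀ z ∈ K, ‖v - u‖ ≤ ‖v - z‖) : ⟪v - u, u⟫ = 0 := by
  have hray : ∀ s : ℝ, 0 < s → ‖v - u‖ ≤ ‖(v - u) - (s - 1) • u‖ := fun s hs => by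
    simpa [sub_smul, sub_sub, add_comm] using hproj _ (hcone u huK s hs)
  have hle := real_inner_nonpos_of_norm_le_norm_sub_smul (x := v - u) (y := u)
    fun t ht _ => by simpa using hray (1 + t) (by linarith)
  have hge := real_inner_nonpos_of_norm_le_norm_sub_smul (x := v - u) (y := -u)
    fun t ht ht1 => by simpa [smul_neg] using hray (1 - t) (by linarith)
  rw [inner_neg_right] at hge
  linarith

lemma mem_polar_of_forall_norm_le_norm_sub {v : E} (hproj : ∀ z ∈ K, ‖v‖ ≤ ‖v - z‖) :
    ∀ z ∈ K, ⟪v, z⟫ ≤ 0 := fun z hz =>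
  real_inner_nonpos_of_norm_le_norm_sub_smul fun t ht _ => hproj _ (hcone z hz t ht)

end Cone

lemma norm_le_norm_sub_of_real_inner_sub_self_eq_zero {v u w : E} (horth : ⟪v - u, u⟫ = 0)
    (hw : ⟪w, u⟫ ≤ 0) : ‖u‖ ≤ ‖v - w‖ := by
  have hvu : ‖u‖ ^ 2 = ⟪v, u⟫ := by
    rw [inner_sub_left, real_inner_self_eq_norm_sq] at horth
    linarith
  have hcs : ‖u‖ * ‖u‖ ≤ ‖v - w‖ * ‖u‖ := calc
    ‖u‖ * ‖u‖ = ⟪v, u⟫ := by rw [← hvu, sq]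
    _ ≤ ⟪v - w, u⟫ := by rw [inner_sub_left]; linarith
    _ ≤ ‖v - w‖ * ‖u‖ := real_inner_le_norm _ _
  rcases (norm_nonneg u).eq_or_lt with hu | hu
  · rw [← hu]; exact norm_nonneg _
  · exact le_of_mul_le_mul_right hcs hu

end InnerProductSpace

theorem stmt6_general {E : Type*} [NormedAddCommGroup E] [InnerProductSpace ℝ E]
    (K : Set E)
    (hcone : ∀ u ∈ K, ∀ α : ℝ, 0 < α → α • u ∈ K)
    (v u : E) (huK : u ∈ K) (hproj : ∀ z ∈ K, ‖v - u‖ ≤ ‖v - z‖) :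
    ‖u‖ ≤ Metric.infDist v {w : E | ∀ z ∈ K, (inner ℝ w z : ℝ) ≤ 0} ∧
    (‖u‖ = 0 ↔ Metric.infDist v {w : E | ∀ z ∈ K, (inner ℝ w z : ℝ) ≤ 0} = 0) := by
  have horth := real_inner_sub_self_eq_zero_of_forall_norm_sub_le hcone huK hproj
  have hle : ‖u‖ ≤ Metric.infDist v {w : E | ∀ z ∈ K, (inner ℝ w z : ℝ) ≤ 0} :=
    (Metric.le_infDist ⟨0, fun z _ => by simp⟩).2 fun w hw => by
      rw [dist_eq_norm]
      exact norm_le_norm_sub_of_real_inner_sub_self_eq_zero horth (hw u huK)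
  refine ⟨hle, fun hu => Metric.infDist_zero_of_mem ?_, fun h => ?_⟩
  · rw [norm_eq_zero] at hu
    subst hu
    exact mem_polar_of_forall_norm_le_norm_sub hcone (by simpa using hproj)
  · exact le_antisymm (h ▸ hle) (norm_nonneg u)

/-- Let `E` be a finite-dimensional real inner product space, `K ⊆ E` a nonempty
closed cone, `v ∈ E`, and `u` a projection of `v` onto `K`. Then `‖u‖ ≤ inf{‖v − w‖ : w ∈ K°}`,
and moreover `‖u‖ = 0` if and only if `inf{‖v − w‖ : w ∈ K°} = 0`. -/
theorem stmt6 {E : Type*} [NormedAddCommGroup E] [InnerProductSpace ℝ E] [FiniteDimensional ℝ E]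
    (K : Set E) (hne : K.Nonempty) (hcl : IsClosed K)
    (hcone : ∀ u ∈ K, ∀ α : ℝ, 0 < α → α • u ∈ K)
    (v u : E) (huK : u ∈ K) (hproj : ∀ z ∈ K, ‖v - u‖ ≤ ‖v - z‖) :
    ‖u‖ ≤ Metric.infDist v {w : E | ∀ z ∈ K, (inner ℝ w z : ℝ) ≤ 0} ∧
    (‖u‖ = 0 ↔ Metric.infDist v {w : E | ∀ z ∈ K, (inner ℝ w z : ℝ) ≤ 0} = 0) :=
  stmt6_general K hcone v u huK hproj
end

section
/- Let m, n, r be positive integers. Let f : ℝ^{m×n} → ℝ be twice continuously differentiable with gradient ∇f (taken with respect to the Frobenius inner product) that is Lipschitz continuous with constant L_f ≥ 0. Define g : ℝ^{m×r} × ℝ^{n×r} → ℝ by g(L, R) = f(L Rᵀ). Suppose L ∈ ℝ^{m×r} and R ∈ ℝ^{n×r} satisfy the balance condition Lᵀ L = Rᵀ R, and suppose ε₂ ≥ 0 is such that for all L̇ ∈ ℝ^{m×r} and Ṙ ∈ ℝ^{n×r}, the second derivative at t = 0 of the map t ↦ g(L + t L̇, R + t Ṙ) is at least −ε₂·(‖L̇‖_F²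 + ‖Ṙ‖_F²). Let s ≥ 0 and suppose there exists w ∈ ℝ^r with ‖w‖ = 1 and ‖L w‖² ≤ s. Then for all unit vectors a ∈ ℝ^m and b ∈ ℝ^n, the Frobenius inner product satisfies ⟪∇f(L Rᵀ), a bᵀ⟫_F ≤ ε₂ + 2 L_f s; equivalently, the spectral norm of ∇f(L Rᵀ) is at most ε₂ + 2 L_f s. -/
open Matrix

/-- The Frobenius inner product `⟪A, B⟫_F = trace(Aᵀ B)` on real matrices. -/
noncomputable def finner {m n : ℕ} (A B : Matrix (Fin m) (Fin n) ℝ) : ℝ :=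
  Matrix.trace (Aᵀ * B)

/-- The Frobenius norm `‖A‖_F = √trace(Aᵀ A)`. -/
noncomputable def fnorm {m n : ℕ} (A : Matrix (Fin m) (Fin n) ℝ) : ℝ :=
  Real.sqrt (finner A A)

attribute [local instance]
  Matrix.frobeniusSeminormedAddCommGroup
  Matrix.frobeniusNormedAddCommGroup
  Matrix.frobeniusNormedSpace

/-!
Perturb the factors along `L̇ = a wᵀ`, `Ṙ = -b wᵀ`. Then
`(L + t L̇)(R + t Ṙ)ᵀ = L Rᵀ + t Δ - t² a bᵀ` with `Δ = a (R w)ᵀ - (L w) bᵀ`, so the second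
derivative of `g` along this line is `D²f(L Rᵀ)[Δ, Δ] - 2 ⟪∇f(L Rᵀ), a bᵀ⟫`. A gradient that is
`L_f`-Lipschitz bounds the Hessian term by `L_f ‖Δ‖²`, and balancedness gives `‖R w‖ = ‖L w‖`,
hence `‖Δ‖² ≤ 4 s`. Comparing with the lower bound `-2 ε₂` from the hypothesis gives the claim.
-/

section Calculus

variable {E F : Type*} [NormedAddCommGroup E] [NormedSpace ℝ E]
  [NormedAddCommGroup F] [NormedSpace ℝ F]

theorem iteratedDeriv_two_comp_quadratic {f : E → F} (hf : ContDiff ℝ 2 f) (x u v : E) :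
    iteratedDeriv 2 (fun t : ℝ => f (x + t • u + t ^ 2 • v)) 0 =
      fderiv ℝ (fderiv ℝ f) x u u + (2 : ℝ) • fderiv ℝ f x v := by
  set γ : ℝ → E := fun t => x + t • u + t ^ 2 • v
  have hγ : ∀ t, HasDerivAt γ (u + (2 * t) • v) t := by
    intro t
    refine ((((hasDerivAt_id t).smul_const u).const_add x).add
      ((hasDerivAt_pow 2 t).smul_const v)).congr_deriv ?_
    simp
  have hderiv : deriv (fun t => f (γ t)) = fun t => fderiv ℝ f (γ t) (u + (2 * t) • v) := by
    funext t
    exact ((hf.differentiable (by norm_num) (γ t)).hasFDerivAt.comp_hasDerivAt t (hγ t)).deriv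
  have hf' : Differentiable ℝ (fderiv ℝ f) :=
    (hf.fderiv_right (m := 1) (by norm_num)).differentiable (by norm_num)
  have hlin : HasDerivAt (fun t : ℝ => u + (2 * t) • v) ((2 : ℝ) • v) 0 := by
    simpa using (((hasDerivAt_id (0 : ℝ)).const_mul 2).smul_const v).const_add u
  have hD := ((hf' (γ 0)).hasFDerivAt.comp_hasDerivAt 0 (hγ 0)).clm_apply hlin
  rw [iteratedDeriv_succ, iteratedDeriv_one, hderiv]
  exact hD.deriv.trans (by simp [γ])

theorem fderiv_fderiv_apply_self_le {f : E → ℝ} {K : ℝ} (hK : 0 ≤ K)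
    (hlip : ∀ x y v, ‖fderiv ℝ f x v - fderiv ℝ f y v‖ ≤ K * ‖x - y‖ * ‖v‖) (x v : E) :
    fderiv ℝ (fderiv ℝ f) x v v ≤ K * ‖v‖ ^ 2 := by
  have hD2 : ‖fderiv ℝ (fderiv ℝ f) x‖ ≤ K :=
    norm_fderiv_le_of_lip' ℝ hK <| Filter.Eventually.of_forall fun y =>
      ContinuousLinearMap.opNorm_le_bound _ (by positivity) (hlip y x)
  calc fderiv ℝ (fderiv ℝ f) x v v ≤ ‖fderiv ℝ (fderiv ℝ f) x‖ * ‖v‖ * ‖v‖ :=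
        (le_abs_self _).trans ((fderiv ℝ (fderiv ℝ f) x).le_opNorm₂ v v)
    _ ≤ K * ‖v‖ * ‖v‖ := by gcongr
    _ = K * ‖v‖ ^ 2 := by ring

end Calculus

section Frobenius

variable {ι κ : Type*} [Fintype ι] [Fintype κ]

theorem frobenius_norm_sq_eq_sum (A : Matrix ι κ ℝ) : ‖A‖ ^ 2 = ∑ i, ∑ j, A i j ^ 2 := by
  change ‖WithLp.toLp 2 fun i => WithLp.toLp 2 fun j => A i j‖ ^ 2 = _
  simp [EuclideanSpace.norm_sq_eq, PiLp.norm_sq_eq_of_L2]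

theorem frobenius_norm_vecMulVec_sq (u : ι → ℝ) (v : κ → ℝ) :
    ‖vecMulVec u v‖ ^ 2 = (∑ i, u i ^ 2) * ∑ j, v j ^ 2 := by
  simp only [frobenius_norm_sq_eq_sum, vecMulVec_apply, mul_pow, Finset.sum_mul_sum]

theorem frobenius_norm_vecMulVec_sub_vecMulVec_sq_le {u x : ι → ℝ} {v y : κ → ℝ} {s : ℝ}
    (hu : ∑ i, u i ^ 2 = 1) (hv : ∑ j, v j ^ 2 = 1) (hx : ∑ i, x i ^ 2 ≤ s)
    (hy : ∑ j, y j ^ 2 ≤ s) :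
    ‖vecMulVec u y - vecMulVec x v‖ ^ 2 ≤ 4 * s := by
  have h₁ : ‖vecMulVec u y‖ ^ 2 ≤ s := by rw [frobenius_norm_vecMulVec_sq, hu, one_mul]; exact hy
  have h₂ : ‖vecMulVec x v‖ ^ 2 ≤ s := by rw [frobenius_norm_vecMulVec_sq, hv, mul_one]; exact hx
  calc ‖vecMulVec u y - vecMulVec x v‖ ^ 2 ≤ (‖vecMulVec u y‖ + ‖vecMulVec x v‖) ^ 2 := by
        gcongr; exact norm_sub_le _ _
    _ ≤ 2 * (‖vecMulVec u y‖ ^ 2 + ‖vecMulVec x v‖ ^ 2) := add_sq_le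
    _ ≤ 4 * s := by linarith

end Frobenius

theorem fnorm_eq_norm {m n : ℕ} (A : Matrix (Fin m) (Fin n) ℝ) : fnorm A = ‖A‖ := by
  rw [fnorm, ← Real.sqrt_sq (norm_nonneg A), frobenius_norm_sq_eq_sum]
  simp only [finner, trace, diag, mul_apply, transpose_apply, ← sq]
  rw [Finset.sum_comm]

theorem abs_finner_le {m n : ℕ} (A B : Matrix (Fin m) (Fin n) ℝ) :
    |finner A B| ≤ ‖A‖ * ‖B‖ := by
  have hinner : finner A B = inner ℝ (WithLp.toLp 2 fun i => WithLp.toLp 2 fun j => A i j)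
      (WithLp.toLp 2 fun i => WithLp.toLp 2 fun j => B i j) := by
    simp only [finner, trace, diag, mul_apply, transpose_apply, PiLp.inner_apply,
      RCLike.inner_apply, conj_trivial]
    rw [Finset.sum_comm]
    simp [mul_comm]
  rw [hinner]
  exact abs_real_inner_le_norm _ _

theorem finner_sub_left {m n : ℕ} (A B C : Matrix (Fin m) (Fin n) ℝ) :
    finner (A - B) C = finner A C - finner B C := by
  simp [finner, Matrix.sub_mul, trace_sub]

theorem finner_neg_right {m n : ℕ} (A B : Matrix (Fin m) (Fin n) ℝ) :
    finner A (-B) = -finner A B := by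
  simp [finner]

section Algebra

variable {α : Type*} [CommRing α] {l n r : Type*} [Fintype r]

theorem add_smul_mul_transpose_add_smul (L L' : Matrix l r α) (R R' : Matrix n r α) (t : α) :
    (L + t • L') * (R + t • R')ᵀ = L * Rᵀ + t • (L' * Rᵀ + L * R'ᵀ) + t ^ 2 • (L' * R'ᵀ) := by
  simp only [transpose_add, transpose_smul, Matrix.add_mul, Matrix.mul_add, Matrix.smul_mul,
    Matrix.mul_smul, smul_add, smul_smul, sq]
  abel

theorem add_smul_vecMulVec_mul_transpose_sub_smul_vecMulVec (L : Matrix l r α) (R : Matrix n r α)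
    (a : l → α) (b : n → α) {w : r → α} (hw : w ⬝ᵥ w = 1) (t : α) :
    (L + t • vecMulVec a w) * (R + t • -vecMulVec b w)ᵀ =
      L * Rᵀ + t • (vecMulVec a (R *ᵥ w) - vecMulVec (L *ᵥ w) b) + t ^ 2 • -vecMulVec a b := by
  rw [add_smul_mul_transpose_add_smul, transpose_neg, transpose_vecMulVec, Matrix.mul_neg,
    Matrix.mul_neg, vecMulVec_mul_vecMulVec, hw, one_smul, vecMulVec_mul, vecMul_transpose,
    mul_vecMulVec, sub_eq_add_neg]

theorem sum_mulVec_sq [Fintype l] (M : Matrix l r α) (w : r → α) :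
    ∑ i, (M *ᵥ w) i ^ 2 = w ⬝ᵥ (Mᵀ * M) *ᵥ w := by
  rw [← mulVec_mulVec, dotProduct_mulVec w Mᵀ, vecMul_transpose]
  simp only [dotProduct, sq]

theorem sum_mulVec_sq_eq_of_transpose_mul_self_eq [Fintype l] [Fintype n] {L : Matrix l r α}
    {R : Matrix n r α} (h : Lᵀ * L = Rᵀ * R) (w : r → α) :
    ∑ i, (L *ᵥ w) i ^ 2 = ∑ i, (R *ᵥ w) i ^ 2 := by
  rw [sum_mulVec_sq, sum_mulVec_sq, h]

end Algebra

theorem stmt14_general {m n r : ℕ}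
    (f : Matrix (Fin m) (Fin n) ℝ → ℝ) (hf : ContDiff ℝ 2 f)
    (G : Matrix (Fin m) (Fin n) ℝ → Matrix (Fin m) (Fin n) ℝ)
    (hG : ∀ X V, fderiv ℝ f X V = finner (G X) V)
    (Lf : ℝ) (hLf : 0 ≤ Lf)
    (hlip : ∀ X Y, fnorm (G X - G Y) ≤ Lf * fnorm (X - Y))
    (L : Matrix (Fin m) (Fin r) ℝ) (R : Matrix (Fin n) (Fin r) ℝ)
    (hbal : Lᵀ * L = Rᵀ * R)
    (ε₂ : ℝ)
    (hsec : ∀ (L' : Matrix (Fin m) (Fin r) ℝ) (R' : Matrix (Fin n) (Fin r) ℝ),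
      -ε₂ * (fnorm L' ^ 2 + fnorm R' ^ 2) ≤
        iteratedDeriv 2 (fun t : ℝ => f ((L + t • L') * (R + t • R')ᵀ)) 0)
    (s : ℝ)
    (w : Fin r → ℝ) (hw : ∑ j, w j ^ 2 = 1) (hLw : ∑ i, L.mulVec w i ^ 2 ≤ s)
    (a : Fin m → ℝ) (b : Fin n → ℝ)
    (ha : ∑ i, a i ^ 2 = 1) (hb : ∑ j, b j ^ 2 = 1) :
    finner (G (L * Rᵀ)) (vecMulVec a b) ≤ ε₂ + 2 * Lf * s := by
  have hww : w ⬝ᵥ w = 1 := by simpa [dotProduct, sq] using hw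
  have hlower := hsec (vecMulVec a w) (-vecMulVec b w)
  simp only [add_smul_vecMulVec_mul_transpose_sub_smul_vecMulVec L R a b hww,
    iteratedDeriv_two_comp_quadratic hf, fnorm_eq_norm, norm_neg, frobenius_norm_vecMulVec_sq,
    ha, hb, hw, smul_eq_mul] at hlower
  -- `hG` is stated for the product topology on matrices, which the Frobenius one only unfolds to.
  erw [hG, finner_neg_right] at hlower
  set Δ := vecMulVec a (R *ᵥ w) - vecMulVec (L *ᵥ w) b
  have hDf : ∀ X Y V, ‖fderiv ℝ f X V - fderiv ℝ f Y V‖ ≤ Lf * ‖X - Y‖ * ‖V‖ := fun X Y V => by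
    rw [hG, hG, ← finner_sub_left]
    refine (abs_finner_le _ _).trans ?_
    gcongr
    simpa only [fnorm_eq_norm] using hlip X Y
  have hcurv := fderiv_fderiv_apply_self_le hLf hDf (L * Rᵀ) Δ
  have hΔ : ‖Δ‖ ^ 2 ≤ 4 * s := frobenius_norm_vecMulVec_sub_vecMulVec_sq_le ha hb hLw
    ((sum_mulVec_sq_eq_of_transpose_mul_self_eq hbal w).symm.trans_le hLw)
  nlinarith [mul_le_mul_of_nonneg_left hΔ hLf]

/-- Let `f : ℝ^{m×n} → ℝ` be `C²` with gradient `G = ∇f` (with respect to the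
Frobenius inner product, i.e. `Df(X)[V] = ⟪G X, V⟫_F`) that is `L_f`-Lipschitz (Frobenius norms).
Let `g(L, R) = f(L Rᵀ)`. Suppose `Lᵀ L = Rᵀ R`, and `ε₂ ≥ 0` is such that for all `L̇, Ṙ`, the
second derivative at `t = 0` of `t ↦ g(L + t L̇, R + t Ṙ)` is at least
`−ε₂ (‖L̇‖_F² + ‖Ṙ‖_F²)`. Let `s ≥ 0` and suppose there is a unit vector `w ∈ ℝ^r` with
`‖L w‖² ≤ s`. Then for all unit vectors `a ∈ ℝ^m`, `b ∈ ℝ^n`,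
`⟪∇f(L Rᵀ), a bᵀ⟫_F ≤ ε₂ + 2 L_f s` (equivalently, the spectral norm of `∇f(L Rᵀ)` is at most
`ε₂ + 2 L_f s`). -/
theorem stmt14 {m n r : ℕ} (hm : 0 < m) (hn : 0 < n) (hr : 0 < r)
    (f : Matrix (Fin m) (Fin n) ℝ → ℝ) (hf : ContDiff ℝ 2 f)
    (G : Matrix (Fin m) (Fin n) ℝ → Matrix (Fin m) (Fin n) ℝ)
    (hG : ∀ X V, fderiv ℝ f X V = finner (G X) V)
    (Lf : ℝ) (hLf : 0 ≤ Lf)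
    (hlip : ∀ X Y, fnorm (G X - G Y) ≤ Lf * fnorm (X - Y))
    (L : Matrix (Fin m) (Fin r) ℝ) (R : Matrix (Fin n) (Fin r) ℝ)
    (hbal : Lᵀ * L = Rᵀ * R)
    (ε₂ : ℝ) (hε₂ : 0 ≤ ε₂)
    (hsec : ∀ (L' : Matrix (Fin m) (Fin r) ℝ) (R' : Matrix (Fin n) (Fin r) ℝ),
      -ε₂ * (fnorm L' ^ 2 + fnorm R' ^ 2) ≤
        iteratedDeriv 2 (fun t : ℝ => f ((L + t • L') * (R + t • R')ᵀ)) 0)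
    (s : ℝ) (hs : 0 ≤ s)
    (w : Fin r → ℝ) (hw : ∑ j, w j ^ 2 = 1) (hLw : ∑ i, L.mulVec w i ^ 2 ≤ s)
    (a : Fin m → ℝ) (b : Fin n → ℝ)
    (ha : ∑ i, a i ^ 2 = 1) (hb : ∑ j, b j ^ 2 = 1) :
    finner (G (L * Rᵀ)) (vecMulVec a b) ≤ ε₂ + 2 * Lf * s :=
  stmt14_general f hf G hG Lf hLf hlip L R hbal ε₂ hsec s w hw hLw a b ha hb
end

section
/- Let E be a real inner product space, b ∈ E, H : E → E a continuous linear map that is symmetric (⟪H u, v⟫ = ⟪u, H v⟫ for all u, v), and γ > 0. Define the quadratic model m(s) = ⟪b, s⟫ + ½⟪H s, s⟫ for s ∈ E. Suppose e ∈ E satisfies ‖e‖ = 1, H e = λ•e for some λ < 0, and ⟪b, e⟫ ≤ 0. Then the step s = (γ·(−λ))•e satisfies ‖s‖ ≤ γ·(−λ) and −m(s) ≥ ½ γ² (−λ)³. -/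
open RealInnerProductSpace

noncomputable def quadModel {E : Type*} [NormedAddCommGroup E] [InnerProductSpace ℝ E]
    (b : E) (H : E →ₗ[ℝ] E) (s : E) : ℝ :=
  ⟪b, s⟫ + 1 / 2 * ⟪H s, s⟫

section Eigenvector

variable {E : Type*} [NormedAddCommGroup E] [InnerProductSpace ℝ E]
  {H : E →ₗ[ℝ] E} {e : E} {lam : ℝ}

theorem inner_map_smul_self_of_eigen (heig : H e = lam • e) (t : ℝ) :
    ⟪H (t • e), t • e⟫ = t ^ 2 * lam * ‖e‖ ^ 2 := by
  rw [map_smul, heig, real_inner_smul_left, real_inner_smul_left, real_inner_smul_right,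
    real_inner_self_eq_norm_sq]
  ring

theorem quadModel_smul_of_eigen (b : E) (heig : H e = lam • e) (t : ℝ) :
    quadModel b H (t • e) = t * ⟪b, e⟫ + 1 / 2 * t ^ 2 * lam * ‖e‖ ^ 2 := by
  rw [quadModel, inner_map_smul_self_of_eigen heig, real_inner_smul_right]
  ring

theorem neg_quadModel_smul_of_eigen_ge {b : E} (heig : H e = lam • e) (hbe : ⟪b, e⟫ ≤ 0)
    {t : ℝ} (ht : 0 ≤ t) :
    -(1 / 2 * t ^ 2 * lam * ‖e‖ ^ 2) ≤ -quadModel b H (t • e) := by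
  rw [quadModel_smul_of_eigen b heig]
  nlinarith [mul_nonneg ht (neg_nonneg.mpr hbe)]

end Eigenvector

theorem stmt19_general {E : Type*} [NormedAddCommGroup E] [InnerProductSpace ℝ E]
    (b : E) (H : E →L[ℝ] E)
    (γ : ℝ) (hγ : 0 < γ)
    (e : E) (he : ‖e‖ = 1) (lam : ℝ) (hlam : lam < 0) (heig : H e = lam • e)
    (hbe : (inner ℝ b e : ℝ) ≤ 0) :
    ‖(γ * -lam) • e‖ ≤ γ * -lam ∧
      1 / 2 * γ ^ 2 * (-lam) ^ 3 ≤
        -((inner ℝ b ((γ * -lam) • e) : ℝ) +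
            1 / 2 * (inner ℝ (H ((γ * -lam) • e)) ((γ * -lam) • e) : ℝ)) := by
  have hradius : 0 ≤ γ * -lam := mul_nonneg hγ.le (neg_nonneg.mpr hlam.le)
  refine ⟨by rw [norm_smul_of_nonneg hradius, he, mul_one], ?_⟩
  have hdecrease := neg_quadModel_smul_of_eigen_ge (H := H.toLinearMap) heig hbe hradius
  rw [he] at hdecrease
  calc 1 / 2 * γ ^ 2 * (-lam) ^ 3 = -(1 / 2 * (γ * -lam) ^ 2 * lam * 1 ^ 2) := by ring
    _ ≤ _ := hdecrease

/-- Let `E` be a real inner product space, `b ∈ E`, `H : E → E` a continuous linear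
symmetric map, and `γ > 0`. With the quadratic model `m(s) = ⟪b, s⟫ + ½⟪H s, s⟫`, suppose `e ∈ E`
satisfies `‖e‖ = 1`, `H e = λ • e` for some `λ < 0`, and `⟪b, e⟫ ≤ 0`. Then the step
`s = (γ·(−λ)) • e` satisfies `‖s‖ ≤ γ·(−λ)` and `−m(s) ≥ ½ γ² (−λ)³`. -/
theorem stmt19 {E : Type*} [NormedAddCommGroup E] [InnerProductSpace ℝ E]
    (b : E) (H : E →L[ℝ] E)
    (hsym : ∀ u v : E, (inner ℝ (H u) v : ℝ) = (inner ℝ u (H v) : ℝ))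
    (γ : ℝ) (hγ : 0 < γ)
    (e : E) (he : ‖e‖ = 1) (lam : ℝ) (hlam : lam < 0) (heig : H e = lam • e)
    (hbe : (inner ℝ b e : ℝ) ≤ 0) :
    ‖(γ * -lam) • e‖ ≤ γ * -lam ∧
      1 / 2 * γ ^ 2 * (-lam) ^ 3 ≤
        -((inner ℝ b ((γ * -lam) • e) : ℝ) +
            1 / 2 * (inner ℝ (H ((γ * -lam) • e)) ((γ * -lam) • e) : ℝ)) :=
  stmt19_general b H γ hγ e he lam hlam heig hbe
end
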